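/- Let θ : ℝ → ℝ be defined by θ(t) = e^{−1/t} for t > 0 and θ(t) = 0 for t ≤ 0. Then θ is C^∞, and for every real μ ≥ 1 and every integer n ≥ 1, sup{ |(θ^μ)^{(k)}(t)| : t ∈ [0,1], 0 ≤ k ≤ n } ≤ n^{3n}, where θ^μ(t) := θ(t)^μ (equal to e^{−μ/t} for t > 0 and 0 for t ≤ 0). -/

import Mathlib

open Real Set

/-- `θ(t) = e^{-1/t}` for `t > 0`, `θ(t) = 0` for `t ≤ 0`. -/
noncomputable def theta (t : ℝ) : ℝ := if 0 < t then Real.exp (-1 / t) else 0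

/-!
`θ` is Mathlib's `expNegInvGlue`, and `θ(x)^μ = θ(x/μ)`, so the `k`-th derivative of `θ^μ` is
`μ^{-k} θ⁽ᵏ⁾(x/μ)` and it suffices to bound `θ⁽ᵏ⁾` by `k^{3k}`. For `x > 0`,
`θ⁽ᵏ⁾(x) = Pₖ(1/x) e^{-1/x}` with `Pₖ₊₁ = X²(Pₖ - Pₖ')`. Since `yⁱ e^{-y} ≤ i!` for `y ≥ 0`, `|θ⁽ᵏ⁾|`
is bounded by the factorial-weighted norm `‖∑ aᵢ Xⁱ‖ = ∑ |aᵢ| i!` of `Pₖ`. This norm does not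
increase under differentiation, and multiplying a polynomial of degree `≤ d` by `X²` multiplies it
by at most `(d+1)(d+2)`; hence `‖Pₖ₊₁‖ ≤ 2(2k+1)(2k+2)‖Pₖ‖`, which with `(1 + 1/k)^k ≥ 2` gives
`‖Pₖ‖ ≤ k^{3k}` for `k ≥ 2`. For `k = 1` the bound `y² e^{-y} ≤ 4/e² ≤ 1` is used directly.
-/

open Polynomial
open scoped Nat

theorem theta_eq_expNegInvGlue : theta = expNegInvGlue := by
  funext x
  by_cases hx : 0 < x
  · simp [theta, expNegInvGlue, hx, not_le.2 hx, neg_div]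
  · simp [theta, expNegInvGlue, hx, not_lt.1 hx]

theorem contDiff_theta {n : ℕ∞} : ContDiff ℝ n theta :=
  theta_eq_expNegInvGlue ▸ expNegInvGlue.contDiff

theorem theta_rpow_eq_theta_inv_mul {μ : ℝ} (hμ : 0 < μ) (x : ℝ) :
    theta x ^ μ = theta (μ⁻¹ * x) := by
  by_cases hx : 0 < x
  · have hμx : 0 < μ⁻¹ * x := by positivity
    rw [theta, theta, if_pos hx, if_pos hμx, ← Real.exp_mul]
    congr 1
    field_simp
  · have hμx : ¬ 0 < μ⁻¹ * x := fun h => hx (pos_of_mul_pos_right h (inv_pos.2 hμ).le)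
    rw [theta, theta, if_neg hx, if_neg hμx, Real.zero_rpow hμ.ne']

theorem natDegree_sub_derivative_le (p : ℝ[X]) : (p - derivative p).natDegree ≤ p.natDegree :=
  (natDegree_sub_le _ _).trans <| max_le le_rfl <| (natDegree_derivative_le _).trans (Nat.sub_le _ _)

noncomputable def thetaDerivPoly : ℕ → ℝ[X]
  | 0 => 1
  | k + 1 => X ^ 2 * (thetaDerivPoly k - derivative (thetaDerivPoly k))

theorem iteratedDeriv_theta (k : ℕ) :
    iteratedDeriv k theta = fun x => (thetaDerivPoly k).eval x⁻¹ * theta x := by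
  induction k with
  | zero => simp [thetaDerivPoly]
  | succ k ih =>
    rw [iteratedDeriv_succ, ih, theta_eq_expNegInvGlue]
    funext x
    exact (expNegInvGlue.hasDerivAt_polynomial_eval_inv_mul _ x).deriv

theorem natDegree_thetaDerivPoly_le (k : ℕ) : (thetaDerivPoly k).natDegree ≤ 2 * k := by
  induction k with
  | zero => simp [thetaDerivPoly]
  | succ k ih =>
    have h := (natDegree_sub_derivative_le (thetaDerivPoly k)).trans ih
    calc (thetaDerivPoly (k + 1)).natDegree
        ≤ 2 + (thetaDerivPoly k - derivative (thetaDerivPoly k)).natDegree :=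
          natDegree_mul_le.trans_eq (by rw [natDegree_X_pow])
      _ ≤ 2 * (k + 1) := by omega

noncomputable def factorialNorm (p : ℝ[X]) : ℝ := p.sum fun i a => |a| * i !

theorem factorialNorm_eq_sum_range {p : ℝ[X]} {N : ℕ} (hp : p.natDegree < N) :
    factorialNorm p = ∑ i ∈ Finset.range N, |p.coeff i| * i ! :=
  sum_over_range' p (by simp) N hp

theorem factorialNorm_nonneg (p : ℝ[X]) : 0 ≤ factorialNorm p :=
  Finset.sum_nonneg fun _ _ => by positivity

theorem factorialNorm_one : factorialNorm 1 = 1 := by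
  rw [← C_1, factorialNorm, sum_C_index (by simp)]
  simp

theorem factorialNorm_sub_le (p q : ℝ[X]) :
    factorialNorm (p - q) ≤ factorialNorm p + factorialNorm q := by
  set N := max p.natDegree q.natDegree + 1
  rw [factorialNorm_eq_sum_range (N := N) ((natDegree_sub_le p q).trans_lt (Nat.lt_succ_self _)),
    factorialNorm_eq_sum_range (N := N) (by omega), factorialNorm_eq_sum_range (N := N) (by omega),
    ← Finset.sum_add_distrib]
  refine Finset.sum_le_sum fun i _ => ?_
  rw [coeff_sub, ← add_mul]
  gcongr
  exact abs_sub _ _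

theorem factorialNorm_derivative_le (p : ℝ[X]) :
    factorialNorm (derivative p) ≤ factorialNorm p := by
  have hp' : (derivative p).natDegree < p.natDegree + 1 :=
    (natDegree_derivative_le p).trans_lt (by omega)
  rw [factorialNorm_eq_sum_range hp', factorialNorm_eq_sum_range (N := p.natDegree + 2) (by omega),
    Finset.sum_range_succ' _ (p.natDegree + 1)]
  refine le_add_of_le_of_nonneg (Finset.sum_le_sum fun i _ => le_of_eq ?_) ?_
  · rw [coeff_derivative, abs_mul, Nat.factorial_succ]
    push_cast
    rw [abs_of_nonneg (by positivity : (0 : ℝ) ≤ i + 1)]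
    ring
  · positivity

theorem factorialNorm_X_sq_mul_le {p : ℝ[X]} {d : ℕ} (hp : p.natDegree ≤ d) :
    factorialNorm (X ^ 2 * p) ≤ (d + 1) * (d + 2) * factorialNorm p := by
  have hXp : (X ^ 2 * p).natDegree < d + 3 :=
    natDegree_mul_le.trans_lt (by rw [natDegree_X_pow]; omega)
  rw [factorialNorm_eq_sum_range hXp, factorialNorm_eq_sum_range (N := d + 1) (by omega),
    Finset.sum_range_succ', Finset.sum_range_succ', Finset.mul_sum]
  simp only [coeff_X_pow_mul', show ¬ 2 ≤ 0 by omega, show ¬ 2 ≤ 1 by omega, if_false,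
    abs_zero, zero_mul, add_zero]
  refine Finset.sum_le_sum fun i hi => ?_
  have hid : (i : ℝ) ≤ d := by exact_mod_cast Nat.lt_succ_iff.1 (Finset.mem_range.1 hi)
  rw [show i + 1 + 1 - 2 = i by omega, Nat.factorial_succ, Nat.factorial_succ]
  push_cast
  have hcoeff : 0 ≤ |p.coeff i| * i ! := by positivity
  calc |p.coeff i| * ((i + 1 + 1) * ((i + 1) * i !))
      = ((i + 1) * (i + 2)) * (|p.coeff i| * i !) := by ring
    _ ≤ (d + 1) * (d + 2) * (|p.coeff i| * i !) := by gcongr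

theorem abs_eval_mul_exp_neg_le_factorialNorm (p : ℝ[X]) {x : ℝ} (hx : 0 ≤ x) :
    |p.eval x| * exp (-x) ≤ factorialNorm p := by
  rw [eval_eq_sum, Polynomial.sum_def, factorialNorm, Polynomial.sum_def]
  refine (mul_le_mul_of_nonneg_right (Finset.abs_sum_le_sum_abs _ _) (exp_pos _).le).trans ?_
  rw [Finset.sum_mul]
  refine Finset.sum_le_sum fun i _ => ?_
  have h := pow_div_factorial_le_exp x hx i
  rw [div_le_iff₀ (by positivity)] at h
  rw [abs_mul, abs_of_nonneg (pow_nonneg hx i), mul_assoc]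
  gcongr
  rw [← le_div_iff₀ (exp_pos _), exp_neg, div_inv_eq_mul]
  linarith [h]

theorem factorialNorm_thetaDerivPoly_succ_le (k : ℕ) :
    factorialNorm (thetaDerivPoly (k + 1))
      ≤ (2 * k + 1) * (2 * k + 2) * (2 * factorialNorm (thetaDerivPoly k)) := by
  have hdeg := (natDegree_sub_derivative_le _).trans (natDegree_thetaDerivPoly_le k)
  calc factorialNorm (thetaDerivPoly (k + 1))
      ≤ ((2 * k : ℕ) + 1) * ((2 * k : ℕ) + 2) *
          factorialNorm (thetaDerivPoly k - derivative (thetaDerivPoly k)) :=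
        factorialNorm_X_sq_mul_le hdeg
    _ ≤ (2 * k + 1) * (2 * k + 2) * (2 * factorialNorm (thetaDerivPoly k)) := by
      push_cast
      gcongr
      linarith [factorialNorm_sub_le (thetaDerivPoly k) (derivative (thetaDerivPoly k)),
        factorialNorm_derivative_le (thetaDerivPoly k)]

theorem factorialNorm_thetaDerivPoly_one_le : factorialNorm (thetaDerivPoly 1) ≤ 2 := by
  have h := factorialNorm_X_sq_mul_le (p := 1 - derivative 1) (d := 0) (by simp)
  simpa [thetaDerivPoly, factorialNorm_one] using h

theorem two_mul_pow_self_le_succ_pow {k : ℕ} (hk : k ≠ 0) : 2 * (k : ℝ) ^ k ≤ (k + 1) ^ k := by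
  have hk' : (0 : ℝ) < k := by positivity
  have h := one_add_mul_le_pow (a := (k : ℝ)⁻¹) (by linarith [inv_pos.2 hk']) k
  rw [mul_inv_cancel₀ hk'.ne', one_add_one_eq_two] at h
  calc 2 * (k : ℝ) ^ k ≤ (1 + (k : ℝ)⁻¹) ^ k * k ^ k := by gcongr
    _ = (k + 1) ^ k := by rw [← mul_pow, add_mul, inv_mul_cancel₀ hk'.ne', one_mul, add_comm]

theorem factorialNorm_thetaDerivPoly_le {k : ℕ} (hk : 2 ≤ k) :
    factorialNorm (thetaDerivPoly k) ≤ (k : ℝ) ^ (3 * k) := by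
  induction k, hk using Nat.le_induction with
  | base =>
    have h := factorialNorm_thetaDerivPoly_succ_le 1
    have h1 := factorialNorm_thetaDerivPoly_one_le
    norm_num at h ⊢
    linarith
  | succ k hk ih =>
    have hpow := two_mul_pow_self_le_succ_pow (k := k) (by omega)
    have ha : (0 : ℝ) ≤ (k : ℝ) ^ k := by positivity
    have hk0 : (0 : ℝ) ≤ k := by positivity
    calc factorialNorm (thetaDerivPoly (k + 1))
        ≤ (2 * k + 1) * (2 * k + 2) * (2 * (k : ℝ) ^ (3 * k)) :=
          (factorialNorm_thetaDerivPoly_succ_le k).trans (by gcongr)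
      _ ≤ (k + 1) ^ 3 * (2 * (k : ℝ) ^ k) ^ 3 := by
        rw [mul_pow, pow_mul']
        have : (2 * k + 1) * (2 * k + 2) * 2 ≤ ((k : ℝ) + 1) ^ 3 * 2 ^ 3 := by
          nlinarith [mul_nonneg hk0 (sq_nonneg (k : ℝ)), sq_nonneg (k : ℝ)]
        nlinarith [pow_nonneg ha 3]
      _ ≤ (k + 1) ^ 3 * ((k + 1) ^ k) ^ 3 := by gcongr
      _ = ((k + 1 : ℕ) : ℝ) ^ (3 * (k + 1)) := by push_cast; ring

theorem abs_iteratedDeriv_theta_le_factorialNorm (k : ℕ) (s : ℝ) :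
    |iteratedDeriv k theta s| ≤ factorialNorm (thetaDerivPoly k) := by
  simp only [iteratedDeriv_theta]
  by_cases hs : 0 < s
  · rw [theta, if_pos hs, abs_mul, abs_of_pos (exp_pos _), neg_div, one_div]
    exact abs_eval_mul_exp_neg_le_factorialNorm _ (inv_pos.2 hs).le
  · simpa [theta, hs] using factorialNorm_nonneg _

theorem sq_mul_exp_neg_le_one {x : ℝ} (hx : 0 ≤ x) : x ^ 2 * exp (-x) ≤ 1 := by
  have h := mul_exp_neg_le_exp_neg_one (x / 2)
  have he : exp (-1) ≤ 1 / 2 := by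
    rw [exp_neg, one_div]
    gcongr
    linarith [add_one_le_exp 1]
  have hpos : 0 ≤ x / 2 * exp (-(x / 2)) := by positivity
  calc x ^ 2 * exp (-x) = 4 * (x / 2 * exp (-(x / 2))) ^ 2 := by
        rw [mul_pow, ← exp_nat_mul]; ring_nf
    _ ≤ 4 * (1 / 2) ^ 2 := by gcongr; exact h.trans he
    _ = 1 := by norm_num

theorem abs_iteratedDeriv_one_theta_le_one (s : ℝ) : |iteratedDeriv 1 theta s| ≤ 1 := by
  simp only [iteratedDeriv_theta]
  by_cases hs : 0 < s
  · simp only [thetaDerivPoly, derivative_one, sub_zero, mul_one, eval_pow, eval_X, theta,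
      if_pos hs, neg_div, one_div]
    rw [abs_of_nonneg (by positivity)]
    exact sq_mul_exp_neg_le_one (inv_pos.2 hs).le
  · simp [theta, hs]

theorem abs_iteratedDeriv_theta_le (k : ℕ) (s : ℝ) :
    |iteratedDeriv k theta s| ≤ (k : ℝ) ^ (3 * k) :=
  match k with
  | 0 => by simpa [thetaDerivPoly, factorialNorm_one] using
      abs_iteratedDeriv_theta_le_factorialNorm 0 s
  | 1 => by simpa using abs_iteratedDeriv_one_theta_le_one s
  | k + 2 => (abs_iteratedDeriv_theta_le_factorialNorm _ s).trans
      (factorialNorm_thetaDerivPoly_le (by omega))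

/-- The function `θ` is `C^∞`, and for every real `μ ≥ 1` and every `n ≥ 1`,
`sup { |(θ^μ)⁽ᵏ⁾(t)| : t ∈ [0,1], k ≤ n } ≤ n^{3n}`, where
`θ^μ(t) = θ(t)^μ`. -/
theorem theta_power_derivative_bounds :
    ContDiff ℝ (⊤ : ℕ∞) theta ∧
    ∀ μ : ℝ, 1 ≤ μ → ∀ n : ℕ, 1 ≤ n → ∀ k : ℕ, k ≤ n → ∀ t ∈ Icc (0:ℝ) 1,
      |iteratedDeriv k (fun x : ℝ => theta x ^ μ) t| ≤ (n : ℝ) ^ (3 * n) := by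
  refine ⟨contDiff_theta, fun μ hμ n _ k hk t _ => ?_⟩
  have hμ0 : 0 < μ := by linarith
  have hscale : |μ⁻¹ ^ k| ≤ 1 := by
    rw [abs_of_nonneg (by positivity)]
    exact pow_le_one₀ (by positivity) (inv_le_one_of_one_le₀ hμ)
  have hkn : (k : ℝ) ^ (3 * k) ≤ (n : ℝ) ^ (3 * n) := by
    rw [pow_mul', pow_mul']
    exact_mod_cast Nat.pow_le_pow_left (Nat.pow_self_mono hk) 3
  simp_rw [theta_rpow_eq_theta_inv_mul hμ0]
  rw [iteratedDeriv_comp_const_mul contDiff_theta, abs_mul]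
  calc |μ⁻¹ ^ k| * |iteratedDeriv k theta (μ⁻¹ * t)| ≤ 1 * (k : ℝ) ^ (3 * k) :=
        mul_le_mul hscale (abs_iteratedDeriv_theta_le k _) (abs_nonneg _) zero_le_one
    _ ≤ (n : ℝ) ^ (3 * n) := by rwa [one_mul]
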